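/- arXiv:2103.07696 — 2 statements merged into one kernel-verified Lean document; each statement's English description precedes it below -/
import Mathlib

section
/- Let G be a finite tree with boundary δG containing x, let f be a λ-flow to x on G with λ≥0, and let (u,v) be an edge of G with d(x,u)>d(x,v), where d denotes the graph distance. Let H be the branch from (u,v). Then f(u)−f(v) = λ · Σ_{z∈δH(u,v)∖{v}} f(z), where δH(u,v) denotes the set of degree-one vertices of the subtree H(u,v). -/
/-!
Sum the flow equations over the branch `H`. Since `x` is closer to `v` than to `u`, it lies
outside `H`, so interior vertices of `H` contribute `0` and boundary vertices `lam * f z`. On the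
other hand, edges inside `H` cancel in the sum of `Δf` over `H`; as `uv` is a bridge of the tree,
the only edge leaving `H` is `(u, v)`, so the sum is `f u - f v`. Finally, every neighbour of a
vertex of `H` lies in `H(u,v)`, so the degree-one vertices of `H(u,v)` other than `v` are exactly
the degree-one vertices of `G` in `H`.
-/

open Finset

attribute [local instance] Classical.propDecidable

namespace Steklov

variable {V : Type} [Fintype V] [DecidableEq V]

/-- The boundary of a graph: the set of vertices of degree one. -/
noncomputable def bdry (G : SimpleGraph V) : Finset V :=
  Finset.univ.filter (fun v => G.degree v = 1)

/-- The graph Laplacian `Δf(x) = Σ_{y∼x} (f x - f y)`. -/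
noncomputable def lap (G : SimpleGraph V) (f : V → ℝ) (x : V) : ℝ :=
  ∑ y ∈ G.neighborFinset x, (f x - f y)

/-- `f` is a Steklov eigenfunction of `G` with eigenvalue `lam`:
`f ≠ 0`, `Δf = 0` on the interior and `∂f/∂n = lam • f` on the boundary. -/
noncomputable def IsEigenpair (G : SimpleGraph V) (lam : ℝ) (f : V → ℝ) : Prop :=
  f ≠ 0 ∧ (∀ x, x ∉ bdry G → lap G f x = 0) ∧ ∀ x ∈ bdry G, lap G f x = lam * f x

/-- The first nonzero Steklov eigenvalue of `G`. -/
noncomputable def lambda2 (G : SimpleGraph V) : ℝ :=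
  sInf {lam : ℝ | 0 < lam ∧ ∃ f : V → ℝ, IsEigenpair G lam f}

/-- `f` is a `lam`-flow to `x` on `G`. -/
noncomputable def IsFlow (G : SimpleGraph V) (lam : ℝ) (x : V) (f : V → ℝ) : Prop :=
  f ≠ 0 ∧ (∀ w, w ∉ bdry G → w ≠ x → lap G f w = 0) ∧
    ∀ w ∈ bdry G, w ≠ x → lap G f w = lam * f w

/-- The Rayleigh quotient of `f` (sum over undirected edges in the numerator). -/
noncomputable def rayleigh (G : SimpleGraph V) (f : V → ℝ) : ℝ :=
  ((∑ x, ∑ y ∈ G.neighborFinset x, (f x - f y) ^ 2) / 2) / ∑ x ∈ bdry G, f x ^ 2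

/-- `Σ(G,x)`: the set of `lam ≥ 0` admitting a `lam`-flow `f` to `x` with `f x = 0`
which increases along edges pointing away from `x`. -/
def SigmaSet (G : SimpleGraph V) (x : V) : Set ℝ :=
  {lam | 0 ≤ lam ∧ ∃ f : V → ℝ, IsFlow G lam x f ∧ f x = 0 ∧
    ∀ y z : V, G.Adj y z → G.dist x z < G.dist x y → f z < f y}

/-- `Σ̂(G,x)`: the set of `lam ≥ 0` admitting a `lam`-flow `f` to `x` with `f x = 0`. -/
def SigmaHatSet (G : SimpleGraph V) (x : V) : Set ℝ :=
  {lam | 0 ≤ lam ∧ ∃ f : V → ℝ, IsFlow G lam x f ∧ f x = 0}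

/-- `σ(G,x) = inf Σ(G,x)`. -/
noncomputable def sigma (G : SimpleGraph V) (x : V) : ℝ := sInf (SigmaSet G x)

/-- `σ̂(G,x) = inf Σ̂(G,x)`. -/
noncomputable def sigmaHat (G : SimpleGraph V) (x : V) : ℝ := sInf (SigmaHatSet G x)

/-- The vertex set of the branch from `(u,v)`: the connected component of `u`
after deleting the edge between `u` and `v`. -/
def branchSet (G : SimpleGraph V) (u v : V) : Set V :=
  {w | (G.deleteEdges {s(u, v)}).Reachable u w}

/-- The vertex set of the subtree `H(u,v)` spanned by the branch from `(u,v)` together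
with `v`. -/
def branchClosed (G : SimpleGraph V) (u v : V) : Set V :=
  insert v (branchSet G u v)

/-- `σ(H(u,v), v)`, computed intrinsically in the subtree `H(u,v)`. -/
noncomputable def sigmaB (G : SimpleGraph V) (u v : V) : ℝ :=
  sigma (G.induce (branchClosed G u v)) ⟨v, Set.mem_insert _ _⟩

/-- The double `(G)²_x` of `G` at `x`: two disjoint copies of `G` with the two
copies of `x` identified. -/
def doubleAt (G : SimpleGraph V) (x : V) : SimpleGraph (V ⊕ {v : V // v ≠ x}) where
  Adj a b :=
    match a, b with
    | Sum.inl u, Sum.inl w => G.Adj u w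
    | Sum.inr u, Sum.inr w => G.Adj u.1 w.1
    | Sum.inl u, Sum.inr w => u = x ∧ G.Adj x w.1
    | Sum.inr u, Sum.inl w => w = x ∧ G.Adj x u.1
  symm := by
    constructor
    rintro (u | u) (w | w) h
    · exact h.symm
    · exact h
    · exact h
    · exact h.symm
  loopless := by
    constructor
    rintro (u | u) h
    · exact G.loopless.irrefl u h
    · exact G.loopless.irrefl u.1 h

section Branch

open SimpleGraph

omit [Fintype V] [DecidableEq V]

variable {G : SimpleGraph V} {u v w y x : V}

lemma mem_branchSet_self : u ∈ branchSet G u v := Reachable.refl u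

lemma mem_branchSet_or_eq_of_adj (hw : w ∈ branchSet G u v) (hadj : G.Adj w y) :
    y ∈ branchSet G u v ∨ s(w, y) = s(u, v) := by
  by_cases hwy : s(w, y) = s(u, v)
  · exact .inr hwy
  · exact .inl (hw.trans (Adj.reachable (deleteEdges_adj.mpr ⟨hadj, hwy⟩)))

lemma mem_branchClosed_of_adj (hw : w ∈ branchSet G u v) (hadj : G.Adj w y) :
    y ∈ branchClosed G u v := by
  rcases mem_branchSet_or_eq_of_adj hw hadj with hy | hwy
  · exact Set.mem_insert_of_mem _ hy
  · rcases Sym2.eq_iff.mp hwy with ⟨-, rfl⟩ | ⟨-, rfl⟩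
    · exact Set.mem_insert _ _
    · exact Set.mem_insert_of_mem _ mem_branchSet_self

lemma notMem_branchSet_of_isBridge (hb : G.IsBridge s(u, v)) : v ∉ branchSet G u v := hb

lemma eq_of_adj_of_notMem_branchSet (hb : G.IsBridge s(u, v)) (hw : w ∈ branchSet G u v)
    (hadj : G.Adj w y) (hy : y ∉ branchSet G u v) : w = u ∧ y = v := by
  rcases Sym2.eq_iff.mp ((mem_branchSet_or_eq_of_adj hw hadj).resolve_left hy) with h | ⟨rfl, -⟩
  · exact h
  · exact absurd hw (notMem_branchSet_of_isBridge hb)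

/-- A shortest walk from `x` to `v` cannot pass through `u`, so it avoids the bridge. -/
lemma notMem_branchSet_of_dist_lt (hb : G.IsBridge s(u, v)) (huv : G.Adj u v)
    (hd : G.dist x v < G.dist x u) : x ∉ branchSet G u v := by
  intro hx
  have hxu : G.Reachable x u := Reachable.of_dist_ne_zero (by omega)
  obtain ⟨q, hq⟩ := (hxu.trans huv.reachable).exists_walk_length_eq_dist
  by_cases he : s(u, v) ∈ q.edges
  · have hu : u ∈ q.support := q.fst_mem_support_of_mem_edges he
    have : G.dist x u < G.dist x v :=
      hq ▸ (dist_le _).trans_lt (Walk.length_takeUntil_lt_length hu huv.ne)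
    omega
  · refine hb (hx.trans (q.toDeleteEdges {s(u, v)} ?_).reachable)
    rintro e he' rfl
    exact he he'

end Branch

/-- Discrete divergence theorem: edges inside `S` cancel in pairs. -/
lemma sum_lap_eq_sum_edges_leaving (G : SimpleGraph V) (f : V → ℝ) (S : Finset V) :
    ∑ w ∈ S, lap G f w = ∑ w ∈ S, ∑ y ∈ G.neighborFinset w with y ∉ S, (f w - f y) := by
  have hinner : ∑ w ∈ S, ∑ y ∈ G.neighborFinset w with y ∈ S, (f w - f y) = 0 := by
    have hite : ∑ w ∈ S, ∑ y ∈ G.neighborFinset w with y ∈ S, (f w - f y) =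
        ∑ w ∈ S, ∑ y ∈ S, (if G.Adj w y then f w - f y else 0) := by
      refine Finset.sum_congr rfl fun w _ => ?_
      rw [← Finset.sum_filter]
      exact Finset.sum_congr (by ext; simp [and_comm]) fun _ _ => rfl
    have hsymm : ∑ w ∈ S, ∑ y ∈ S, (if G.Adj w y then f w - f y else 0) =
        -∑ w ∈ S, ∑ y ∈ S, (if G.Adj w y then f w - f y else 0) := by
      conv_lhs => rw [Finset.sum_comm]
      simp only [← Finset.sum_neg_distrib, G.adj_comm _ _]
      refine Finset.sum_congr rfl fun w _ => Finset.sum_congr rfl fun y _ => ?_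
      split_ifs <;> ring
    linarith
  simp only [lap, ← Finset.sum_filter_add_sum_filter_not (G.neighborFinset _) (· ∈ S),
    Finset.sum_add_distrib, hinner, zero_add]

omit [DecidableEq V] in
lemma mem_bdry {G : SimpleGraph V} {w : V} : w ∈ bdry G ↔ G.degree w = 1 := by
  simp [bdry]

lemma sum_lap_eq_of_isFlow {G : SimpleGraph V} {lam : ℝ} {x : V} {f : V → ℝ}
    (hf : IsFlow G lam x f) {S : Finset V} (hxS : x ∉ S) :
    ∑ w ∈ S, lap G f w = lam * ∑ w ∈ S with w ∈ bdry G, f w := by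
  have hint : ∑ w ∈ S with w ∉ bdry G, lap G f w = 0 := Finset.sum_eq_zero fun w hw =>
    hf.2.1 w (Finset.mem_filter.mp hw).2 (ne_of_mem_of_not_mem (Finset.mem_filter.mp hw).1 hxS)
  rw [← Finset.sum_filter_add_sum_filter_not S (· ∈ bdry G), hint, add_zero, Finset.mul_sum]
  exact Finset.sum_congr rfl fun w hw =>
    hf.2.2 w (Finset.mem_filter.mp hw).2 (ne_of_mem_of_not_mem (Finset.mem_filter.mp hw).1 hxS)

section Branch

open SimpleGraph

variable {G : SimpleGraph V} {u v w : V}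

omit [DecidableEq V] in
lemma degree_induce_branchClosed (hw : w ∈ branchSet G u v) :
    (G.induce (branchClosed G u v)).degree ⟨w, Set.mem_insert_of_mem _ hw⟩ = G.degree w :=
  degree_induce_of_neighborSet_subset fun _ hy => mem_branchClosed_of_adj hw hy

lemma sum_lap_branchSet_eq_sub (hb : G.IsBridge s(u, v)) (huv : G.Adj u v) (f : V → ℝ) :
    ∑ w ∈ (branchSet G u v).toFinset, lap G f w = f u - f v := by
  rw [sum_lap_eq_sum_edges_leaving,
    Finset.sum_eq_single_of_mem u (Set.mem_toFinset.mpr mem_branchSet_self)]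
  · rw [Finset.sum_eq_single_of_mem v
      (by simpa [huv] using notMem_branchSet_of_isBridge hb)]
    intro y hy hyv
    simp only [Finset.mem_filter, mem_neighborFinset, Set.mem_toFinset] at hy
    exact absurd (eq_of_adj_of_notMem_branchSet hb mem_branchSet_self hy.1 hy.2).2 hyv
  · intro w hw hwu
    refine Finset.sum_eq_zero fun y hy => ?_
    simp only [Finset.mem_filter, mem_neighborFinset, Set.mem_toFinset] at hw hy
    exact absurd (eq_of_adj_of_notMem_branchSet hb hw hy.1 hy.2).1 hwu

lemma map_erase_bdry_induce_branchClosed (hb : G.IsBridge s(u, v)) :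
    ((bdry (G.induce (branchClosed G u v))).erase ⟨v, Set.mem_insert _ _⟩).map
      (Function.Embedding.subtype _) = {w ∈ (branchSet G u v).toFinset | w ∈ bdry G} := by
  ext w
  simp only [Finset.mem_map, Finset.mem_erase, Function.Embedding.subtype_apply,
    Finset.mem_filter, Set.mem_toFinset, mem_bdry]
  constructor
  · rintro ⟨⟨w, hw | hw⟩, ⟨hne, hdeg⟩, rfl⟩
    · exact absurd (Subtype.ext hw) hne
    · exact ⟨hw, degree_induce_branchClosed hw ▸ hdeg⟩
  · rintro ⟨hw, hdeg⟩
    refine ⟨⟨w, Set.mem_insert_of_mem _ hw⟩,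
      ⟨fun h => notMem_branchSet_of_isBridge hb (Subtype.mk.inj h ▸ hw),
        (degree_induce_branchClosed hw).trans hdeg⟩, rfl⟩

end Branch

theorem edge_flow_general (G : SimpleGraph V) (hG : G.IsTree)
    (x : V) (lam : ℝ) (f : V → ℝ)
    (hf : IsFlow G lam x f) (u v : V) (huv : G.Adj u v)
    (hd : G.dist x v < G.dist x u) :
    f u - f v =
      lam * ∑ z ∈ (bdry (G.induce (branchClosed G u v))).erase
        ⟨v, Set.mem_insert _ _⟩, f z.1 := by
  have hb : G.IsBridge s(u, v) := SimpleGraph.isAcyclic_iff_forall_adj_isBridge.mp hG.2 huv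
  rw [← sum_lap_branchSet_eq_sub hb huv f,
    sum_lap_eq_of_isFlow hf (by simpa using notMem_branchSet_of_dist_lt hb huv hd),
    ← map_erase_bdry_induce_branchClosed hb, Finset.sum_map]
  rfl

/-- For a `lam`-flow `f` to `x ∈ δG` and an edge `(u,v)` with
`d(x,u) > d(x,v)`, one has `f u - f v = lam · Σ_{z ∈ δH(u,v) ∖ {v}} f z`, where `H` is
the branch from `(u,v)` and `δH(u,v)` is the set of degree-one vertices of `H(u,v)`. -/
theorem edge_flow (G : SimpleGraph V) (hG : G.IsTree) (hcard : 2 ≤ Fintype.card V)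
    (x : V) (hx : x ∈ bdry G) (lam : ℝ) (hlam : 0 ≤ lam) (f : V → ℝ)
    (hf : IsFlow G lam x f) (u v : V) (huv : G.Adj u v)
    (hd : G.dist x v < G.dist x u) :
    f u - f v =
      lam * ∑ z ∈ (bdry (G.induce (branchClosed G u v))).erase
        ⟨v, Set.mem_insert _ _⟩, f z.1 :=
  edge_flow_general G hG x lam f hf u v huv hd
end Steklov
end

section
/- Let G be a finite tree with boundary δG containing x. The set Σ̂(G,x) of values λ≥0 for which there exists a λ-flow f to x on G with f(x)=0 is finite, with cardinality at most |δG|−1. Consequently, if Σ(G,x)≠∅, then the infima defining σ(G,x) and σ̂(G,x) are attained as minima and σ(G,x) ≥ σ̂(G,x) ≥ λ₂((G)²_x) > 0. -/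
open Finset

attribute [local instance] Classical.propDecidable

/-!
Every `λ ∈ Σ̂(G,x)` is an eigenvalue of a mixed problem: Dirichlet condition at `x`, Steklov
condition on the other `|δG| - 1` leaves. These eigenvalues are the roots of `det (A - λ B)`,
where `λ` enters only through the Steklov rows, so this polynomial has degree at most `|δG| - 1`.
It is not the zero polynomial: on a connected graph the energy identity
`∑ f Δf = ∑_{edges} (f y - f z)²` rules out negative eigenvalues, and also `λ = 0` once a
Dirichlet vertex is present. Finiteness makes the infima minima. The odd extension of a
minimising flow to the double `(G)²_x` is a Steklov eigenfunction with eigenvalue `σ̂(G,x)`, giving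
`λ₂ ≤ σ̂`, and `λ₂ > 0` because the Steklov spectrum of the connected double is finite as well.
-/

namespace Steklov

open Polynomial Matrix

section Laplacian

variable {V : Type} [Fintype V] {G : SimpleGraph V}

lemma lap_neg (f : V → ℝ) (w : V) : lap G (-f) w = -lap G f w := by
  simp only [lap, Pi.neg_apply, ← sum_neg_distrib, neg_sub_neg, neg_sub]

lemma lap_of_neighborFinset_eq_map {W : Type} [Fintype W] {H : SimpleGraph W}
    (φ : V ↪ W) {v : V} (hN : H.neighborFinset (φ v) = (G.neighborFinset v).map φ)
    (F : W → ℝ) : lap H F (φ v) = lap G (F ∘ φ) v := by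
  rw [lap, hN, sum_map, lap]
  rfl

lemma degree_of_neighborFinset_eq_map {W : Type} [Fintype W] {H : SimpleGraph W}
    (φ : V ↪ W) {v : V} (hN : H.neighborFinset (φ v) = (G.neighborFinset v).map φ) :
    H.degree (φ v) = G.degree v := by
  rw [← SimpleGraph.card_neighborFinset_eq_degree, hN, card_map,
    SimpleGraph.card_neighborFinset_eq_degree]

end Laplacian

section MixedProblem

variable {V : Type} [Fintype V] [DecidableEq V] {H : SimpleGraph V}

lemma lap_eq_lapMatrix_mulVec (f : V → ℝ) (w : V) : lap H f w = (H.lapMatrix ℝ *ᵥ f) w := by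
  rw [SimpleGraph.lapMatrix_mulVec_apply, lap, sum_sub_distrib, sum_const,
    SimpleGraph.card_neighborFinset_eq_degree, nsmul_eq_mul]

lemma eq_of_sum_mul_lap_nonpos (hconn : H.Preconnected) {f : V → ℝ}
    (h : ∑ w, f w * lap H f w ≤ 0) (a b : V) : f a = f b := by
  have hL := SimpleGraph.posSemidef_lapMatrix ℝ H
  have henergy : star f ⬝ᵥ (H.lapMatrix ℝ *ᵥ f) = ∑ w, f w * lap H f w := by
    simp only [star_trivial, dotProduct, lap_eq_lapMatrix_mulVec]
  have hzero : H.lapMatrix ℝ *ᵥ f = 0 :=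
    (hL.dotProduct_mulVec_zero_iff f).mp
      (le_antisymm (henergy ▸ h) (hL.dotProduct_mulVec_nonneg f))
  exact SimpleGraph.lapMatrix_mulVec_eq_zero_iff_forall_reachable H |>.mp hzero a b (hconn a b)

variable (H) in
def IsMixedEigenfunction (D S : Finset V) (lam : ℝ) (f : V → ℝ) : Prop :=
  f ≠ 0 ∧ (∀ w ∈ D, f w = 0) ∧ ∀ w ∉ D, lap H f w = if w ∈ S then lam * f w else 0

variable (H) in
def mixedSpectrum (D S : Finset V) : Set ℝ := {lam | ∃ f, IsMixedEigenfunction H D S lam f}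

variable {D S : Finset V} {lam : ℝ} {f : V → ℝ}

lemma IsMixedEigenfunction.eq_of_nonpos (hf : IsMixedEigenfunction H D S lam f)
    (hconn : H.Preconnected) (hlam : lam ≤ 0) (a b : V) : f a = f b := by
  refine eq_of_sum_mul_lap_nonpos hconn (sum_nonpos fun w _ => ?_) a b
  by_cases hD : w ∈ D
  · simp [hf.2.1 w hD]
  · rw [hf.2.2 w hD]
    split_ifs
    · nlinarith [mul_self_nonneg (f w)]
    · simp

lemma zero_notMem_mixedSpectrum (hconn : H.Preconnected) (hD : D.Nonempty) :
    (0 : ℝ) ∉ mixedSpectrum H D S := by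
  rintro ⟨f, hf⟩
  obtain ⟨d, hd⟩ := hD
  exact hf.1 <| funext fun a => (hf.eq_of_nonpos hconn le_rfl a d).trans (hf.2.1 d hd)

lemma nonneg_of_mem_mixedSpectrum (hconn : H.Preconnected) (hDS : (D ∪ S).Nonempty)
    (hlam : lam ∈ mixedSpectrum H D S) : 0 ≤ lam := by
  by_contra! hneg
  obtain ⟨f, hf⟩ := hlam
  have hconst := hf.eq_of_nonpos hconn hneg.le
  obtain ⟨d, hd⟩ := hDS
  have hfd : f d = 0 := by
    by_cases hdD : d ∈ D
    · exact hf.2.1 d hdD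
    · have hlap : lap H f d = 0 := sum_eq_zero fun y _ => sub_eq_zero.mpr (hconst d y)
      have hdS : d ∈ S := by simpa [hdD] using hd
      rw [hf.2.2 d hdD, if_pos hdS] at hlap
      exact (mul_eq_zero.mp hlap).resolve_left hneg.ne
  exact hf.1 <| funext fun a => (hconst a d).trans hfd

variable (H D S) in
noncomputable def pencil : Matrix V V ℝ[X] := Matrix.of fun w y =>
  if w ∈ D then (if w = y then 1 else 0)
  else C (H.lapMatrix ℝ w y) - if w ∈ S ∧ w = y then X else 0

lemma pencil_eval_mulVec_apply (w : V) :
    ((pencil H D S).map (eval lam) *ᵥ f) w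
      = if w ∈ D then f w else lap H f w - if w ∈ S then lam * f w else 0 := by
  by_cases hD : w ∈ D
  · simp [pencil, hD, Matrix.mulVec, dotProduct, apply_ite (eval lam)]
  · by_cases hS : w ∈ S <;>
      simp [pencil, hD, hS, Matrix.mulVec, dotProduct, sub_mul, sum_sub_distrib,
        lap_eq_lapMatrix_mulVec, apply_ite (eval lam)]

lemma pencil_eval_mulVec_eq_zero_iff :
    (pencil H D S).map (eval lam) *ᵥ f = 0 ↔
      (∀ w ∈ D, f w = 0) ∧ ∀ w ∉ D, lap H f w = if w ∈ S then lam * f w else 0 := by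
  simp only [funext_iff, Pi.zero_apply, pencil_eval_mulVec_apply]
  refine ⟨fun h => ⟨fun w hw => by simpa [hw] using h w, fun w hw => ?_⟩, fun ⟨h0, h1⟩ w => ?_⟩
  · simpa [hw, sub_eq_zero] using h w
  · by_cases hw : w ∈ D <;> simp [hw, h0, h1]

lemma mem_mixedSpectrum_iff_isRoot :
    lam ∈ mixedSpectrum H D S ↔ (pencil H D S).det.IsRoot lam := by
  rw [IsRoot.def, ← coe_evalRingHom, RingHom.map_det, ← exists_mulVec_eq_zero_iff]
  simp only [mixedSpectrum, IsMixedEigenfunction, Set.mem_ofPred_eq, RingHom.mapMatrix_apply,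
    coe_evalRingHom, pencil_eval_mulVec_eq_zero_iff]

lemma natDegree_pencil_le (w y : V) :
    (pencil H D S w y).natDegree ≤ if w ∈ S then 1 else 0 := by
  by_cases hS : w ∈ S <;>
    simp only [pencil, of_apply, hS, true_and, false_and, if_true, if_false] <;>
    split_ifs <;> compute_degree!

lemma natDegree_det_pencil_le : (pencil H D S).det.natDegree ≤ S.card := by
  rw [det_apply']
  refine natDegree_sum_le_of_forall_le _ _ fun σ _ => natDegree_mul_le.trans ?_
  rw [natDegree_intCast, zero_add]
  calc (∏ i, pencil H D S (σ i) i).natDegree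
      ≤ ∑ i, if σ i ∈ S then 1 else 0 :=
        (natDegree_prod_le _ _).trans (sum_le_sum fun i _ => natDegree_pencil_le _ _)
    _ = ∑ w, if w ∈ S then 1 else 0 := Fintype.sum_equiv σ _ _ fun _ => rfl
    _ = S.card := by simp

lemma det_pencil_ne_zero (hconn : H.Preconnected) (hDS : (D ∪ S).Nonempty) :
    (pencil H D S).det ≠ 0 := fun h =>
  absurd (nonneg_of_mem_mixedSpectrum hconn hDS (lam := -1)
    (mem_mixedSpectrum_iff_isRoot.mpr (by simp [h]))) (by norm_num)

lemma mixedSpectrum_eq_roots (hconn : H.Preconnected) (hDS : (D ∪ S).Nonempty) :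
    mixedSpectrum H D S = ↑(pencil H D S).det.roots.toFinset := by
  ext lam
  simp [mem_mixedSpectrum_iff_isRoot, det_pencil_ne_zero hconn hDS]

lemma mixedSpectrum_finite (hconn : H.Preconnected) (hDS : (D ∪ S).Nonempty) :
    (mixedSpectrum H D S).Finite := by
  rw [mixedSpectrum_eq_roots hconn hDS]
  exact finite_toSet _

lemma ncard_mixedSpectrum_le (hconn : H.Preconnected) (hDS : (D ∪ S).Nonempty) :
    (mixedSpectrum H D S).ncard ≤ S.card := by
  rw [mixedSpectrum_eq_roots hconn hDS, Set.ncard_coe_finset]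
  exact (Multiset.toFinset_card_le _).trans ((card_roots' _).trans natDegree_det_pencil_le)

end MixedProblem

section Double

variable {V : Type} {G : SimpleGraph V} {x : V}

@[simp] lemma doubleAt_adj_inl_inl (u w : V) : (doubleAt G x).Adj (.inl u) (.inl w) ↔ G.Adj u w :=
  Iff.rfl

@[simp] lemma doubleAt_adj_inr_inr (u w : {v : V // v ≠ x}) :
    (doubleAt G x).Adj (.inr u) (.inr w) ↔ G.Adj u w := Iff.rfl

@[simp] lemma doubleAt_adj_inl_inr (u : V) (w : {v : V // v ≠ x}) :
    (doubleAt G x).Adj (.inl u) (.inr w) ↔ u = x ∧ G.Adj x w := Iff.rfl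

@[simp] lemma doubleAt_adj_inr_inl (u : {v : V // v ≠ x}) (w : V) :
    (doubleAt G x).Adj (.inr u) (.inl w) ↔ w = x ∧ G.Adj x u := Iff.rfl

variable [DecidableEq V] {f : V → ℝ}

variable (x) in
def mirror : V ↪ V ⊕ {v : V // v ≠ x} where
  toFun v := if h : v = x then .inl x else .inr ⟨v, h⟩
  inj' a b h := by
    by_cases ha : a = x <;> by_cases hb : b = x <;> simp_all

lemma mirror_self : mirror x x = .inl x := dif_pos rfl

lemma mirror_of_ne (u : {v : V // v ≠ x}) : mirror x u = .inr u := dif_neg u.2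

lemma mirror_eq_inl_iff (v w : V) : mirror x v = .inl w ↔ v = x ∧ w = x := by
  by_cases hv : v = x
  · simp [mirror_self, hv, eq_comm]
  · simp [mirror_of_ne ⟨v, hv⟩, hv]

lemma mirror_eq_inr_iff (v : V) (w : {v : V // v ≠ x}) : mirror x v = .inr w ↔ v = w := by
  by_cases hv : v = x <;> simp [mirror, hv, Subtype.ext_iff, w.2.symm]

variable (x) in
def oddExtension (f : V → ℝ) : V ⊕ {v : V // v ≠ x} → ℝ := Sum.elim f fun u => -f u

lemma oddExtension_comp_mirror (hfx : f x = 0) : oddExtension x f ∘ mirror x = -f := by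
  funext v
  by_cases hv : v = x
  · subst hv; simp [mirror_self, oddExtension, hfx]
  · simp [mirror_of_ne ⟨v, hv⟩, oddExtension]

variable (G x) in
def mirrorHom : G →g doubleAt G x where
  toFun := mirror x
  map_rel' {a b} hab := by
    obtain rfl | ha := eq_or_ne a x
    · rw [mirror_self, mirror_of_ne ⟨b, (G.ne_of_adj hab).symm⟩]
      exact ⟨rfl, hab⟩
    obtain rfl | hb := eq_or_ne b x
    · rw [mirror_self, mirror_of_ne ⟨a, ha⟩]
      exact ⟨rfl, hab.symm⟩
    rw [mirror_of_ne ⟨a, ha⟩, mirror_of_ne ⟨b, hb⟩]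
    exact hab

lemma mirrorHom_apply (v : V) : mirrorHom G x v = mirror x v := rfl

lemma doubleAt_preconnected (hG : G.Preconnected) : (doubleAt G x).Preconnected := by
  have hinl : ∀ v, (doubleAt G x).Reachable (.inl v) (.inl x) :=
    fun v => (hG v x).map ⟨Sum.inl, id⟩
  have hreach : ∀ a, (doubleAt G x).Reachable a (.inl x)
    | .inl v => hinl v
    | .inr u => by
      have h := (hG u x).map (mirrorHom G x)
      rwa [mirrorHom_apply, mirrorHom_apply, mirror_of_ne, mirror_self] at h
  exact fun a b => (hreach a).trans (hreach b).symm

end Double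

section DoubleLaplacian

variable {V : Type} [Fintype V] [DecidableEq V] {G : SimpleGraph V} {x : V} {f : V → ℝ}

lemma neighborFinset_doubleAt_inl {y : V} (hy : y ≠ x) :
    (doubleAt G x).neighborFinset (.inl y) = (G.neighborFinset y).map .inl := by
  ext (w | w) <;> simp [hy]

lemma neighborFinset_doubleAt_mirror (u : {v : V // v ≠ x}) :
    (doubleAt G x).neighborFinset (mirror x u) = (G.neighborFinset u).map (mirror x) := by
  ext (w | w) <;> simp [mirror_of_ne, mirror_eq_inl_iff, mirror_eq_inr_iff, G.adj_comm, and_comm]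

lemma neighborFinset_doubleAt_inl_self :
    (doubleAt G x).neighborFinset (.inl x)
      = (G.neighborFinset x).disjSum ((G.neighborFinset x).subtype (· ≠ x)) := by
  ext (w | w) <;> simp

lemma mem_bdry_doubleAt_inl {y : V} (hy : y ≠ x) :
    .inl y ∈ bdry (doubleAt G x) ↔ y ∈ bdry G := by
  simp only [bdry, mem_filter, mem_univ, true_and]
  rw [← Function.Embedding.inl_apply,
    degree_of_neighborFinset_eq_map _ (neighborFinset_doubleAt_inl hy)]

lemma mem_bdry_doubleAt_inr (u : {v : V // v ≠ x}) :
    .inr u ∈ bdry (doubleAt G x) ↔ (u : V) ∈ bdry G := by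
  simp only [bdry, mem_filter, mem_univ, true_and]
  rw [← mirror_of_ne, degree_of_neighborFinset_eq_map _ (neighborFinset_doubleAt_mirror u)]

lemma lap_oddExtension_inl {y : V} (hy : y ≠ x) :
    lap (doubleAt G x) (oddExtension x f) (.inl y) = lap G f y :=
  lap_of_neighborFinset_eq_map .inl (neighborFinset_doubleAt_inl hy) _

lemma lap_oddExtension_inr (hfx : f x = 0) (u : {v : V // v ≠ x}) :
    lap (doubleAt G x) (oddExtension x f) (.inr u) = -lap G f u := by
  rw [← mirror_of_ne, lap_of_neighborFinset_eq_map _ (neighborFinset_doubleAt_mirror u),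
    oddExtension_comp_mirror hfx, lap_neg]

lemma lap_oddExtension_inl_self (hfx : f x = 0) :
    lap (doubleAt G x) (oddExtension x f) (.inl x) = 0 := by
  rw [lap, neighborFinset_doubleAt_inl_self, sum_disjSum]
  simp only [oddExtension, Sum.elim_inl, Sum.elim_inr, hfx]
  rw [sum_subtype_eq_sum_filter (f := fun w => 0 - -f w),
    filter_true_of_mem fun w hw => (G.ne_of_adj ((G.mem_neighborFinset x w).mp hw)).symm]
  simp

lemma isEigenpair_doubleAt_oddExtension {lam : ℝ} (hf : IsFlow G lam x f) (hfx : f x = 0) :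
    IsEigenpair (doubleAt G x) lam (oddExtension x f) := by
  refine ⟨fun h => hf.1 (funext fun v => congrFun h (.inl v)), ?_, ?_⟩
  · rintro (y | u) hb
    · by_cases hy : y = x
      · rw [hy]
        exact lap_oddExtension_inl_self hfx
      · rw [lap_oddExtension_inl hy]
        exact hf.2.1 y (fun h => hb ((mem_bdry_doubleAt_inl hy).mpr h)) hy
    · rw [lap_oddExtension_inr hfx, hf.2.1 u (fun h => hb ((mem_bdry_doubleAt_inr u).mpr h)) u.2,
        neg_zero]
  · rintro (y | u) hb
    · by_cases hy : y = x
      · rw [hy, lap_oddExtension_inl_self hfx]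
        simp [oddExtension, hfx]
      · rw [lap_oddExtension_inl hy, hf.2.2 y ((mem_bdry_doubleAt_inl hy).mp hb) hy]
        rfl
    · rw [lap_oddExtension_inr hfx, hf.2.2 u ((mem_bdry_doubleAt_inr u).mp hb) u.2]
      simp [oddExtension]

end DoubleLaplacian

section Spectrum

variable {V : Type} [Fintype V] {H : SimpleGraph V} {lam : ℝ} {f : V → ℝ}

lemma IsEigenpair.isMixedEigenfunction (hf : IsEigenpair H lam f) :
    IsMixedEigenfunction H ∅ (bdry H) lam f := by
  refine ⟨hf.1, by simp, fun w _ => ?_⟩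
  split_ifs with hw
  · exact hf.2.2 w hw
  · exact hf.2.1 w hw

lemma IsFlow.isMixedEigenfunction [DecidableEq V] {x : V} (hf : IsFlow H lam x f) (hfx : f x = 0) :
    IsMixedEigenfunction H {x} ((bdry H).erase x) lam f := by
  refine ⟨hf.1, by simpa using hfx, fun w hw => ?_⟩
  rw [mem_singleton] at hw
  split_ifs with hb
  · exact hf.2.2 w (mem_of_mem_erase hb) hw
  · exact hf.2.1 w (fun h => hb (mem_erase.mpr ⟨hw, h⟩)) hw

lemma lambda2_le (hlam : 0 < lam) (hf : IsEigenpair H lam f) : lambda2 H ≤ lam :=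
  csInf_le ⟨0, fun _ h => h.1.le⟩ ⟨hlam, f, hf⟩

lemma lambda2_pos (hconn : H.Preconnected) (hb : (bdry H).Nonempty) (hlam : 0 < lam)
    (hf : IsEigenpair H lam f) : 0 < lambda2 H := by
  have hfin : {lam : ℝ | 0 < lam ∧ ∃ f : V → ℝ, IsEigenpair H lam f}.Finite :=
    (mixedSpectrum_finite (D := ∅) hconn (by simpa using hb)).subset <| by
      rintro _ ⟨_, f, hf⟩
      exact ⟨f, hf.isMixedEigenfunction⟩
  exact (hfin.isCompact.isLeast_sInf ⟨lam, hlam, f, hf⟩).1.1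

lemma sigmaSet_subset_sigmaHatSet (G : SimpleGraph V) (x : V) : SigmaSet G x ⊆ SigmaHatSet G x :=
  fun _ ⟨h0, f, hf, hfx, _⟩ => ⟨h0, f, hf, hfx⟩

lemma sigmaHatSet_subset_mixedSpectrum [DecidableEq V] (G : SimpleGraph V) (x : V) :
    SigmaHatSet G x ⊆ mixedSpectrum G {x} ((bdry G).erase x) :=
  fun _ ⟨_, f, hf, hfx⟩ => ⟨f, hf.isMixedEigenfunction hfx⟩

end Spectrum

variable {V : Type} [Fintype V] [DecidableEq V]

lemma exists_mem_bdry_ne_of_isTree {G : SimpleGraph V} (hG : G.IsTree)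
    (hcard : 2 ≤ Fintype.card V) (x : V) : ∃ y ∈ bdry G, y ≠ x := by
  have : Nontrivial V := Fintype.one_lt_card_iff_nontrivial.mp hcard
  obtain ⟨u, v, huv, hu, hv⟩ := hG.exists_ne_and_degree_eq_one
  by_cases hux : u = x
  · exact ⟨v, by simpa [bdry] using hv, fun h => huv (hux.trans h.symm)⟩
  · exact ⟨u, by simpa [bdry] using hu, hux⟩

/-- For `x ∈ δG`, the set `Σ̂(G,x)` is finite with at most `|δG| - 1`
elements; consequently, if `Σ(G,x) ≠ ∅` then the infima defining `σ(G,x)` and `σ̂(G,x)`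
are attained as minima, and `σ(G,x) ≥ σ̂(G,x) ≥ λ₂((G)²_x) > 0`. -/
theorem sigmaHat_finite (G : SimpleGraph V) (hG : G.IsTree) (hcard : 2 ≤ Fintype.card V)
    (x : V) (hx : x ∈ bdry G) :
    (SigmaHatSet G x).Finite ∧ (SigmaHatSet G x).ncard ≤ (bdry G).card - 1 ∧
    ((SigmaSet G x).Nonempty →
      IsLeast (SigmaSet G x) (sigma G x) ∧
      IsLeast (SigmaHatSet G x) (sigmaHat G x) ∧
      sigmaHat G x ≤ sigma G x ∧
      lambda2 (doubleAt G x) ≤ sigmaHat G x ∧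
      0 < lambda2 (doubleAt G x)) := by
  have hconn := hG.connected.preconnected
  have hDS : ({x} ∪ (bdry G).erase x).Nonempty := ⟨x, by simp⟩
  have hsub := sigmaHatSet_subset_mixedSpectrum G x
  have hfin : (SigmaHatSet G x).Finite := (mixedSpectrum_finite hconn hDS).subset hsub
  refine ⟨hfin, ?_, fun hne => ?_⟩
  · calc (SigmaHatSet G x).ncard
        ≤ (mixedSpectrum G {x} ((bdry G).erase x)).ncard :=
          Set.ncard_le_ncard hsub (mixedSpectrum_finite hconn hDS)
      _ ≤ ((bdry G).erase x).card := ncard_mixedSpectrum_le hconn hDS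
      _ = (bdry G).card - 1 := card_erase_of_mem hx
  have hSsub := sigmaSet_subset_sigmaHatSet G x
  have hleast : IsLeast (SigmaHatSet G x) (sigmaHat G x) :=
    hfin.isCompact.isLeast_sInf (hne.mono hSsub)
  obtain ⟨hσ0, f, hf, hfx⟩ := hleast.1
  have hσpos : 0 < sigmaHat G x := hσ0.lt_of_ne fun h =>
    zero_notMem_mixedSpectrum hconn (singleton_nonempty x) (h ▸ hsub hleast.1)
  have hpair := isEigenpair_doubleAt_oddExtension hf hfx
  obtain ⟨y, hy, hyx⟩ := exists_mem_bdry_ne_of_isTree hG hcard x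
  exact ⟨(hfin.subset hSsub).isCompact.isLeast_sInf hne, hleast,
    csInf_le_csInf hfin.bddBelow hne hSsub, lambda2_le hσpos hpair,
    lambda2_pos (doubleAt_preconnected hconn) ⟨.inl y, (mem_bdry_doubleAt_inl hyx).mpr hy⟩
      hσpos hpair⟩
end Steklov
end
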